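/- Provably in EA, for every Π₁-sentence π: EA⁺ ⊢ π if and only if EA ⊢ [1]_EA π. -/

import Mathlib

/-!
Write `c` for `¬B⊥`. If `EA + c ⊢ π`, then `EA ⊢ ¬π → B⊥`, and `B⊥ → Bπ` by monotonicity of `B`;
with `π → Bπ` this gives `EA ⊢ Bπ` by cases on `π`. Conversely, if `EA ⊢ Bπ`, then under `¬π`
completeness gives `B¬π`, hence `B⊥` by distribution, contradicting `c`.
-/

/-- An abstract propositional language with implication and falsum. -/
structure Lang (F : Type) where
  imp : F → F → F
  bot : F

namespace Lang
variable {F : Type} (L : Lang F)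
def neg (φ : F) : F := L.imp φ L.bot
def top : F := L.neg L.bot
def conj (φ ψ : F) : F := L.neg (L.imp φ (L.neg ψ))
def iff (φ ψ : F) : F := L.conj (L.imp φ ψ) (L.imp ψ φ)
end Lang

/-- Classical propositional derivability from a set of axioms `Γ`
(a Hilbert system with modus ponens). -/
inductive Deriv {F : Type} (L : Lang F) (Γ : Set F) : F → Prop
  | hyp {φ} : φ ∈ Γ → Deriv L Γ φ
  | ax1 (φ ψ) : Deriv L Γ (L.imp φ (L.imp ψ φ))
  | ax2 (φ ψ χ) : Deriv L Γ (L.imp (L.imp φ (L.imp ψ χ)) (L.imp (L.imp φ ψ) (L.imp φ χ)))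
  | ax3 (φ ψ) : Deriv L Γ (L.imp (L.imp (L.neg φ) (L.neg ψ)) (L.imp ψ φ))
  | mp {φ ψ} : Deriv L Γ (L.imp φ ψ) → Deriv L Γ φ → Deriv L Γ ψ

/-- The local reflection schema for a provability predicate `Bx`. -/
def RfnSet {F : Type} (L : Lang F) (Bx : F → F) : Set F := {χ | ∃ ψ, χ = L.imp (Bx ψ) ψ}

namespace Deriv

variable {F : Type} {L : Lang F} {Γ Δ : Set F}

lemma weaken (h : Γ ⊆ Δ) {φ : F} (d : Deriv L Γ φ) : Deriv L Δ φ := by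
  induction d with
  | hyp hm => exact .hyp (h hm)
  | ax1 φ ψ => exact .ax1 φ ψ
  | ax2 φ ψ χ => exact .ax2 φ ψ χ
  | ax3 φ ψ => exact .ax3 φ ψ
  | mp _ _ ih₁ ih₂ => exact .mp ih₁ ih₂

lemma weaken_union (φ : F) {ψ : F} (d : Deriv L Γ ψ) : Deriv L (Γ ∪ {φ}) ψ :=
  d.weaken Set.subset_union_left

lemma hyp_union (φ : F) : Deriv L (Γ ∪ {φ}) φ :=
  .hyp (Or.inr rfl)

lemma imp_self (φ : F) : Deriv L Γ (L.imp φ φ) :=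
  .mp (.mp (.ax2 φ (L.imp φ φ) φ) (.ax1 φ (L.imp φ φ))) (.ax1 φ φ)

theorem deduction {φ ψ : F} (d : Deriv L (Γ ∪ {φ}) ψ) : Deriv L Γ (L.imp φ ψ) := by
  induction d with
  | @hyp χ hm =>
    rcases hm with hΓ | rfl
    · exact .mp (.ax1 χ φ) (.hyp hΓ)
    · exact imp_self χ
  | ax1 a b => exact .mp (.ax1 _ φ) (.ax1 a b)
  | ax2 a b c => exact .mp (.ax1 _ φ) (.ax2 a b c)
  | ax3 a b => exact .mp (.ax1 _ φ) (.ax3 a b)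
  | @mp a b _ _ ih₁ ih₂ => exact .mp (.mp (.ax2 φ a b) ih₁) ih₂

lemma imp_trans {φ ψ χ : F} (h₁ : Deriv L Γ (L.imp φ ψ)) (h₂ : Deriv L Γ (L.imp ψ χ)) :
    Deriv L Γ (L.imp φ χ) :=
  .mp (.mp (.ax2 φ ψ χ) (.mp (.ax1 _ φ) h₂)) h₁

-- `⊥ → ¬⊤` is an instance of `ax1`, so `ax3` turns `¬φ → ¬⊤` into `⊤ → φ`.
lemma by_contra {φ : F} (h : Deriv L (Γ ∪ {L.neg φ}) L.bot) : Deriv L Γ φ :=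
  .mp (.mp (.ax3 φ L.top) ((deduction h).imp_trans (.ax1 L.bot L.top))) (imp_self L.bot)

lemma not_not_imp (φ : F) : Deriv L Γ (L.imp (L.neg (L.neg φ)) φ) :=
  deduction <| by_contra <| .mp ((hyp_union _).weaken_union _) (hyp_union _)

lemma bot_imp (φ : F) : Deriv L Γ (L.imp L.bot φ) :=
  (Deriv.ax1 L.bot (L.neg φ)).imp_trans (not_not_imp φ)

lemma contrapose {φ ψ : F} (h : Deriv L Γ (L.imp φ ψ)) : Deriv L Γ (L.imp (L.neg ψ) (L.neg φ)) :=
  deduction <| deduction <|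
    .mp ((hyp_union _).weaken_union _) (.mp ((h.weaken_union _).weaken_union _) (hyp_union _))

lemma by_cases {φ χ : F} (h₁ : Deriv L Γ (L.imp φ χ)) (h₂ : Deriv L Γ (L.imp (L.neg φ) χ)) :
    Deriv L Γ χ := by
  refine by_contra ?_
  have hnχ : Deriv L (Γ ∪ {L.neg χ}) (L.neg χ) := hyp_union _
  have hnφ : Deriv L (Γ ∪ {L.neg χ}) (L.neg φ) := .mp (h₁.weaken_union _).contrapose hnχ
  exact .mp hnχ (.mp (h₂.weaken_union _) hnφ)

variable {B : F → F}

lemma box_mono (nec : ∀ φ, Deriv L Γ φ → Deriv L Γ (B φ))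
    (dist : ∀ φ ψ, Deriv L Γ (L.imp (B (L.imp φ ψ)) (L.imp (B φ) (B ψ))))
    {φ ψ : F} (h : Deriv L Γ (L.imp φ ψ)) : Deriv L Γ (L.imp (B φ) (B ψ)) :=
  .mp (dist φ ψ) (nec _ h)

theorem box_of_deriv_union_not_box_bot (nec : ∀ φ, Deriv L Γ φ → Deriv L Γ (B φ))
    (dist : ∀ φ ψ, Deriv L Γ (L.imp (B (L.imp φ ψ)) (L.imp (B φ) (B ψ))))
    {π : F} (hπ : Deriv L Γ (L.imp π (B π))) (h : Deriv L (Γ ∪ {L.neg (B L.bot)}) π) :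
    Deriv L Γ (B π) := by
  have hnπ : Deriv L Γ (L.imp (L.neg π) (B L.bot)) :=
    (deduction h).contrapose.imp_trans (not_not_imp _)
  exact by_cases hπ (hnπ.imp_trans (box_mono nec dist (bot_imp π)))

theorem deriv_union_not_box_bot_of_box
    (dist : ∀ φ ψ, Deriv L Γ (L.imp (B (L.imp φ ψ)) (L.imp (B φ) (B ψ))))
    {π : F} (hπ : Deriv L Γ (L.imp (L.neg π) (B (L.neg π)))) (h : Deriv L Γ (B π)) :
    Deriv L (Γ ∪ {L.neg (B L.bot)}) π := by
  refine by_contra ?_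
  have hnπ : Deriv L ((Γ ∪ {L.neg (B L.bot)}) ∪ {L.neg π}) (L.neg π) := hyp_union _
  have lift {φ : F} (d : Deriv L Γ φ) : Deriv L ((Γ ∪ {L.neg (B L.bot)}) ∪ {L.neg π}) φ :=
    (d.weaken_union _).weaken_union _
  have hboxBot : Deriv L ((Γ ∪ {L.neg (B L.bot)}) ∪ {L.neg π}) (B L.bot) :=
    .mp (.mp (lift (dist π L.bot)) (.mp (lift hπ) hnπ)) (lift h)
  exact .mp ((hyp_union _).weaken_union _) hboxBot

theorem deriv_union_not_box_bot_iff (nec : ∀ φ, Deriv L Γ φ → Deriv L Γ (B φ))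
    (dist : ∀ φ ψ, Deriv L Γ (L.imp (B (L.imp φ ψ)) (L.imp (B φ) (B ψ))))
    {π : F} (hpos : Deriv L Γ (L.imp π (B π)))
    (hneg : Deriv L Γ (L.imp (L.neg π) (B (L.neg π)))) :
    Deriv L (Γ ∪ {L.neg (B L.bot)}) π ↔ Deriv L Γ (B π) :=
  ⟨box_of_deriv_union_not_box_bot nec dist hpos, deriv_union_not_box_bot_of_box dist hneg⟩

end Deriv

theorem stmt15_general {F : Type} (L : Lang F) (EA : Set F) (B : F → F) (Pi1 : Set F)
    (nec : ∀ φ, Deriv L EA φ → Deriv L EA (B φ))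
    (dist : ∀ φ ψ, Deriv L EA (L.imp (B (L.imp φ ψ)) (L.imp (B φ) (B ψ))))
    (complPos : ∀ π ∈ Pi1, Deriv L EA (L.imp π (B π)))
    (complNeg : ∀ π ∈ Pi1, Deriv L EA (L.imp (L.neg π) (B (L.neg π)))) :
    ∀ π ∈ Pi1, (Deriv L (EA ∪ {L.neg (B L.bot)}) π ↔ Deriv L EA (B π)) :=
  fun π hπ => Deriv.deriv_union_not_box_bot_iff nec dist (complPos π hπ) (complNeg π hπ)

/-- Provably, for every `Π₁`-sentence `π`:
`EA⁺ ⊢ π` iff `EA ⊢ [1]_EA π`, where `EA⁺ ≡ EA + ⟨1⟩_EA ⊤` with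
`⟨1⟩_EA ⊤ := ¬[1]_EA ⊥`, and `B = [1]_EA` satisfies the Löb conditions and
provable `Σ₂`-completeness for `Π₁`-sentences and their negations. -/
theorem stmt15 {F : Type} (L : Lang F) (EA : Set F) (B : F → F) (Pi1 : Set F)
    (nec : ∀ φ, Deriv L EA φ → Deriv L EA (B φ))
    (dist : ∀ φ ψ, Deriv L EA (L.imp (B (L.imp φ ψ)) (L.imp (B φ) (B ψ))))
    (trans : ∀ φ, Deriv L EA (L.imp (B φ) (B (B φ))))
    (complPos : ∀ π ∈ Pi1, Deriv L EA (L.imp π (B π)))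
    (complNeg : ∀ π ∈ Pi1, Deriv L EA (L.imp (L.neg π) (B (L.neg π)))) :
    ∀ π ∈ Pi1, (Deriv L (EA ∪ {L.neg (B L.bot)}) π ↔ Deriv L EA (B π)) :=
  stmt15_general L EA B Pi1 nec dist complPos complNeg
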